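/- arXiv:2409.02014 — 4 statements merged into one kernel-verified Lean document; each statement's English description precedes it below -/
import Mathlib

section
/- Let d ≥ 1, ρ ≥ 1, S > 0, and let Φ, φ ∈ Υ_{ρ,S}. Suppose there exists an open neighborhood V of 0 in ℝ^d such that for all t₁, t₂ ∈ V: φ(t₁ + t₂)·Φ(t₁)·Φ(t₂) = Φ(t₁ + t₂)·φ(t₁)·φ(t₂). Then there exists c ∈ ℝ^d such that φ(z) = Φ(z)·exp(i·cᵀz) for all z ∈ ℂ^d (where cᵀz = ∑_j c_j z_j). In other words, an element of Υ_{ρ,S} satisfying the Kotlarski-type functional equation with Φ on a real neighborhood of 0 equals Φ up to translation. -/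
noncomputable section
open MeasureTheory

/-- first-order partial derivative of `φ : ℂ^d → ℂ` in the coordinate direction `a` -/
def pderiv1 {d : ℕ} (a : Fin d) (φ : (Fin d → ℂ) → ℂ) : (Fin d → ℂ) → ℂ :=
  fun z => fderiv ℂ φ z (Pi.single a 1)

/-- iterated partial derivatives along a list of coordinate directions -/
def pderivList {d : ℕ} : List (Fin d) → ((Fin d → ℂ) → ℂ) → ((Fin d → ℂ) → ℂ)
  | [], φ => φ
  | a :: l, φ => pderiv1 a (pderivList l φ)

/-- the list of directions encoding the multi-index `j` -/
def multiIndexList {d : ℕ} (j : Fin d → ℕ) : List (Fin d) :=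
  (List.finRange d).flatMap fun a => List.replicate (j a) a

/-- `∂^j φ (0)` for a multi-index `j` -/
def pderivMulti {d : ℕ} (j : Fin d → ℕ) (φ : (Fin d → ℂ) → ℂ) : ℂ :=
  pderivList (multiIndexList j) φ 0

/-- total degree `‖j‖₁` of a multi-index -/
def degTot {d : ℕ} (j : Fin d → ℕ) : ℕ := ∑ a, j a

/-- the class `Υ_{ρ,S}` of entire functions `φ : ℂ^d → ℂ` with `φ(0) = 1`, conjugation
symmetry on ℝ^d, and Taylor coefficients at 0 bounded by `S^{‖j‖₁}/‖j‖₁^{‖j‖₁/ρ}`. -/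
def Upsilon (d : ℕ) (ρ S : ℝ) : Set ((Fin d → ℂ) → ℂ) :=
  {φ | AnalyticOnNhd ℂ φ Set.univ ∧ φ 0 = 1 ∧
    (∀ t : Fin d → ℝ,
      (starRingEnd ℂ) (φ fun a => (t a : ℂ)) = φ fun a => (-(t a) : ℂ)) ∧
    ∀ j : Fin d → ℕ, j ≠ 0 →
      ‖pderivMulti j φ‖ / ∏ a, (Nat.factorial (j a) : ℝ) ≤
        S ^ degTot j / ((degTot j : ℝ) ^ ((degTot j : ℝ) / ρ))}

/-!
On real points write `ψ = φ / Φ`. Near `0` the functional equation says exactly that `ψ` is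
multiplicative, so `ψ · exp (-L)` with `L = Dψ(0)` has zero derivative and `ψ = exp ∘ L`.
Conjugation symmetry gives `ψ(-t) = conj ψ(t)`, hence `|ψ| = 1` and `L = i cᵀ(·)` for a real `c`.
Then `φ - Φ · exp (i cᵀ z)` is entire and vanishes on a real box around `0`; applying the
one-variable identity theorem coordinate by coordinate, it vanishes on all of `ℂ^d`.
-/

open Set Metric Filter Topology Complex ComplexConjugate

lemma Differentiable.eq_zero_of_eventually_ofReal {h : ℂ → ℂ} (hh : Differentiable ℂ h)
    (h0 : ∀ᶠ x : ℝ in 𝓝 0, h x = 0) (w : ℂ) : h w = 0 := by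
  have hofReal : Tendsto ((↑) : ℝ → ℂ) (𝓝[≠] 0) (𝓝[≠] 0) :=
    continuous_ofReal.continuousWithinAt.tendsto_nhdsWithin fun _ ↦ by simp
  have hfreq : ∃ᶠ z in 𝓝[≠] (0 : ℂ), h z = 0 :=
    hofReal.frequently (h0.filter_mono nhdsWithin_le_nhds).frequently
  have hh' : AnalyticOnNhd ℂ h univ := fun z _ ↦ hh.analyticAt z
  exact hh'.eqOn_zero_of_preconnected_of_frequently_eq_zero isPreconnected_univ (mem_univ 0)
    hfreq (mem_univ w)

lemma Differentiable.eq_zero_of_eq_zero_on_real_ball {ι : Type*} [Fintype ι]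
    {g : (ι → ℂ) → ℂ} (hg : Differentiable ℂ g) {r : ℝ} (hr : 0 < r)
    (h : ∀ t : ι → ℝ, ‖t‖ < r → g (fun a ↦ (t a : ℂ)) = 0) (z : ι → ℂ) : g z = 0 := by
  classical
  suffices ∀ s : Finset ι, ∀ z : ι → ℂ, (∀ i ∉ s, ∃ x : ℝ, |x| < r ∧ (x : ℂ) = z i) → g z = 0
    from this Finset.univ z fun i hi ↦ absurd (Finset.mem_univ i) hi
  intro s
  induction s using Finset.induction_on with
  | empty =>
    intro z hz
    choose t ht hzt using fun i ↦ hz i (Finset.notMem_empty i)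
    rw [← funext hzt]
    exact h t ((pi_norm_lt_iff hr).2 fun i ↦ by simpa using ht i)
  | insert a s _ ih =>
    intro z hz
    have hline : Differentiable ℂ fun w ↦ g (Function.update z a w) :=
      hg.comp fun w ↦ (hasFDerivAt_update z w).differentiableAt
    have hreal : ∀ᶠ x : ℝ in 𝓝 0, g (Function.update z a x) = 0 := by
      filter_upwards [Metric.ball_mem_nhds (0 : ℝ) hr] with x hx
      refine ih _ fun i hi ↦ ?_
      by_cases hia : i = a
      · subst hia
        exact ⟨x, by simpa using hx, by simp⟩
      · simpa [Function.update_of_ne hia] using hz i (by simp [hia, hi])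
    simpa using hline.eq_zero_of_eventually_ofReal hreal (z a)

section MulAdd
variable {E : Type*} [NormedAddCommGroup E] [NormedSpace ℝ E] {ψ : E → ℂ} {r : ℝ}

lemma hasFDerivAt_of_map_add_eq_mul
    (hmul : ∀ s t, ‖s‖ < r → ‖t‖ < r → ψ (s + t) = ψ s * ψ t) (hψ : DifferentiableAt ℝ ψ 0)
    {t : E} (ht : ‖t‖ < r) : HasFDerivAt ψ (ψ t • fderiv ℝ ψ 0) t := by
  have htr : 0 < r - ‖t‖ := by linarith
  have hshift : (fun x ↦ ψ t * ψ (x - t)) =ᶠ[𝓝 t] ψ := by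
    filter_upwards [Metric.ball_mem_nhds t htr] with x hx
    rw [mem_ball, dist_eq_norm] at hx
    rw [← hmul t (x - t) ht (by linarith [norm_nonneg t]), add_sub_cancel]
  have hd : HasFDerivAt (fun x ↦ ψ (x - t)) (fderiv ℝ ψ 0) t := by
    have h0 : HasFDerivAt ψ (fderiv ℝ ψ 0) (t - t) := by simpa using hψ.hasFDerivAt
    exact h0.comp (f := fun x ↦ x - t) t ((hasFDerivAt_id t).sub_const t)
  exact (hd.const_mul (ψ t)).congr_of_eventuallyEq hshift.symm

lemma eq_exp_fderiv_of_map_add_eq_mul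
    (hmul : ∀ s t, ‖s‖ < r → ‖t‖ < r → ψ (s + t) = ψ s * ψ t) (hψ : DifferentiableAt ℝ ψ 0)
    (hψ0 : ψ 0 = 1) {t : E} (ht : ‖t‖ < r) : ψ t = exp (fderiv ℝ ψ 0 t) := by
  set L := fderiv ℝ ψ 0
  have hu : ∀ x ∈ ball (0 : E) r, HasFDerivAt (fun x ↦ ψ x * exp (-L x)) (0 : E →L[ℝ] ℂ) x := by
    intro x hx
    refine ((hasFDerivAt_of_map_add_eq_mul hmul hψ (mem_ball_zero_iff.1 hx)).mul
      L.hasFDerivAt.neg.cexp).congr_fderiv ?_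
    ext v
    simp only [Pi.neg_apply, smul_neg, add_apply, neg_apply, smul_apply, smul_eq_mul, zero_apply]
    ring
  have hr : 0 < r := (norm_nonneg t).trans_lt ht
  have hconst := isOpen_ball.is_const_of_fderiv_eq_zero isPreconnected_ball
    (fun x hx ↦ (hu x hx).differentiableAt.differentiableWithinAt)
    (fun x hx ↦ (hu x hx).fderiv) (mem_ball_zero_iff.2 ht) (mem_ball_self hr)
  rw [hψ0, map_zero, neg_zero, exp_zero, mul_one, exp_neg, mul_inv_eq_one₀ (exp_ne_zero _)]
    at hconst
  exact hconst

end MulAdd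

lemma Complex.re_eq_zero_of_conj_exp_eq_exp_neg {w : ℂ} (h : conj (exp w) = exp (-w)) :
    w.re = 0 := by
  have := congrArg norm h
  rw [norm_conj, norm_exp, norm_exp, neg_re, Real.exp_eq_exp] at this
  linarith

lemma LinearMap.eq_zero_of_forall_norm_lt {E F : Type*} [NormedAddCommGroup E] [NormedSpace ℝ E]
    [AddCommGroup F] [Module ℝ F] (ℓ : E →ₗ[ℝ] F) {r : ℝ} (hr : 0 < r)
    (h : ∀ t, ‖t‖ < r → ℓ t = 0) (t : E) : ℓ t = 0 := by
  set c := r / (‖t‖ + 1)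
  have hc : 0 < c := by positivity
  have hct : ‖c • t‖ < r := by
    rw [norm_smul, Real.norm_of_nonneg hc.le, div_mul_eq_mul_div, div_lt_iff₀ (by positivity)]
    nlinarith
  simpa [hc.ne'] using h _ hct

lemma ContinuousLinearMap.eq_I_mul_sum_of_re_eq_zero {ι : Type*} [Fintype ι] [DecidableEq ι]
    (L : (ι → ℝ) →L[ℝ] ℂ) (hre : ∀ t, (L t).re = 0) (t : ι → ℝ) :
    L t = I * ∑ j, ((L (Pi.single j 1)).im : ℂ) * t j := by
  have hbasis : ∀ j, L (Pi.single j 1) = I * (L (Pi.single j 1)).im := fun j ↦ by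
    apply Complex.ext <;> simp [hre]
  conv_lhs => rw [pi_eq_sum_univ' t, map_sum]
  rw [Finset.mul_sum]
  refine Finset.sum_congr rfl fun j _ ↦ ?_
  rw [map_smul, real_smul]
  linear_combination (t j : ℂ) * hbasis j

lemma exists_ball_map_add_eq_mul_div {E : Type*} [NormedAddCommGroup E] {F G : E → ℂ}
    (hG : ContinuousAt G 0) (hG0 : G 0 ≠ 0) {V : Set E} (hV : V ∈ 𝓝 0)
    (heq : ∀ t₁ ∈ V, ∀ t₂ ∈ V, F (t₁ + t₂) * G t₁ * G t₂ = G (t₁ + t₂) * F t₁ * F t₂) :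
    ∃ r > 0, (∀ t, ‖t‖ < r → G t ≠ 0) ∧
      ∀ s t, ‖s‖ < r → ‖t‖ < r → F (s + t) / G (s + t) = F s / G s * (F t / G t) := by
  obtain ⟨ε, hε, hball⟩ :=
    Metric.mem_nhds_iff.1 (inter_mem hV (hG.eventually_ne hG0))
  have hmem : ∀ t, ‖t‖ < ε → t ∈ V ∧ G t ≠ 0 := fun t ht ↦ hball (mem_ball_zero_iff.2 ht)
  refine ⟨ε / 2, half_pos hε, fun t ht ↦ (hmem t (by linarith)).2, fun s t hs ht ↦ ?_⟩
  have hst : ‖s + t‖ < ε := by linarith [norm_add_le s t]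
  rw [div_mul_div_comm, div_eq_div_iff (hmem _ hst).2
    (mul_ne_zero (hmem s (by linarith)).2 (hmem t (by linarith)).2)]
  linear_combination heq s (hmem s (by linarith)).1 t (hmem t (by linarith)).1

theorem exists_eq_mul_exp_of_functional_eq {ι : Type*} [Fintype ι] {F G : (ι → ℝ) → ℂ}
    (hF : DifferentiableAt ℝ F 0) (hG : DifferentiableAt ℝ G 0) (hF0 : F 0 = 1) (hG0 : G 0 = 1)
    (hFc : ∀ t, conj (F t) = F (-t)) (hGc : ∀ t, conj (G t) = G (-t))
    {V : Set (ι → ℝ)} (hV : V ∈ 𝓝 0)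
    (heq : ∀ t₁ ∈ V, ∀ t₂ ∈ V, F (t₁ + t₂) * G t₁ * G t₂ = G (t₁ + t₂) * F t₁ * F t₂) :
    ∃ c : ι → ℝ, ∃ r > 0, ∀ t, ‖t‖ < r → F t = G t * exp (I * ∑ j, (c j : ℂ) * t j) := by
  classical
  have hG0' : G 0 ≠ 0 := by simp [hG0]
  obtain ⟨r, hr, hGne, hmul⟩ := exists_ball_map_add_eq_mul_div hG.continuousAt hG0' hV heq
  set ψ : (ι → ℝ) → ℂ := fun t ↦ F t / G t
  have hψ : DifferentiableAt ℝ ψ 0 := by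
    simp only [ψ, div_eq_mul_inv]
    exact hF.mul (hG.inv hG0')
  set L := fderiv ℝ ψ 0
  have hexp : ∀ t, ‖t‖ < r → ψ t = exp (L t) := fun t ht ↦
    eq_exp_fderiv_of_map_add_eq_mul (ψ := ψ) hmul hψ (by simp [ψ, hF0, hG0]) ht
  have hre : ∀ t, (L t).re = 0 :=
    (reLm.comp L.toLinearMap).eq_zero_of_forall_norm_lt hr fun t ht ↦
      show (L t).re = 0 from re_eq_zero_of_conj_exp_eq_exp_neg <| by
        rw [← hexp t ht, ← map_neg, ← hexp (-t) (by rwa [norm_neg])]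
        simp only [ψ, map_div₀, hFc, hGc]
  refine ⟨fun j ↦ (L (Pi.single j 1)).im, r, hr, fun t ht ↦ ?_⟩
  rw [← L.eq_I_mul_sum_of_re_eq_zero hre, ← hexp t ht, mul_div_cancel₀ _ (hGne t ht)]

lemma differentiable_comp_ofReal {ι : Type*} [Fintype ι] {g : (ι → ℂ) → ℂ}
    (hg : Differentiable ℂ g) : Differentiable ℝ fun t : ι → ℝ ↦ g fun a ↦ (t a : ℂ) :=
  (hg.restrictScalars ℝ).comp (by fun_prop)

theorem statement7_general (d : ℕ) (ρ S : ℝ)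
    (Φ φ : (Fin d → ℂ) → ℂ) (hΦ : Φ ∈ Upsilon d ρ S) (hφ : φ ∈ Upsilon d ρ S)
    (V : Set (Fin d → ℝ)) (hV : IsOpen V) (h0 : (0 : Fin d → ℝ) ∈ V)
    (heq : ∀ t₁ ∈ V, ∀ t₂ ∈ V,
      φ (fun a => ((t₁ a + t₂ a : ℝ) : ℂ)) * Φ (fun a => (t₁ a : ℂ)) *
          Φ (fun a => (t₂ a : ℂ)) =
        Φ (fun a => ((t₁ a + t₂ a : ℝ) : ℂ)) * φ (fun a => (t₁ a : ℂ)) *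
          φ (fun a => (t₂ a : ℂ))) :
    ∃ c : Fin d → ℝ, ∀ z : Fin d → ℂ,
      φ z = Φ z * Complex.exp (Complex.I * ∑ j, (c j : ℂ) * z j) := by
  obtain ⟨hφa, hφ0, hφc, -⟩ := hφ
  obtain ⟨hΦa, hΦ0, hΦc, -⟩ := hΦ
  have hφd : Differentiable ℂ φ := fun z ↦ (hφa z (mem_univ z)).differentiableAt
  have hΦd : Differentiable ℂ Φ := fun z ↦ (hΦa z (mem_univ z)).differentiableAt
  obtain ⟨c, r, hr, hreal⟩ := exists_eq_mul_exp_of_functional_eq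
    ((differentiable_comp_ofReal hφd) 0) ((differentiable_comp_ofReal hΦd) 0)
    (by simpa [← Pi.zero_def] using hφ0) (by simpa [← Pi.zero_def] using hΦ0)
    (by simpa using hφc) (by simpa using hΦc)
    (hV.mem_nhds h0) heq
  have hdiff : Differentiable ℂ fun z ↦ φ z - Φ z * exp (I * ∑ j, (c j : ℂ) * z j) := by
    fun_prop
  exact ⟨c, fun z ↦ sub_eq_zero.1 <| hdiff.eq_zero_of_eq_zero_on_real_ball hr
    (fun t ht ↦ sub_eq_zero.2 (hreal t ht)) z⟩

/-- uniqueness up to translation in `Υ_{ρ,S}` for the Kotlarski-type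
functional equation on a real neighborhood of 0. -/
theorem statement7 (d : ℕ) (hd : 1 ≤ d) (ρ S : ℝ) (hρ : 1 ≤ ρ) (hS : 0 < S)
    (Φ φ : (Fin d → ℂ) → ℂ) (hΦ : Φ ∈ Upsilon d ρ S) (hφ : φ ∈ Upsilon d ρ S)
    (V : Set (Fin d → ℝ)) (hV : IsOpen V) (h0 : (0 : Fin d → ℝ) ∈ V)
    (heq : ∀ t₁ ∈ V, ∀ t₂ ∈ V,
      φ (fun a => ((t₁ a + t₂ a : ℝ) : ℂ)) * Φ (fun a => (t₁ a : ℂ)) *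
          Φ (fun a => (t₂ a : ℂ)) =
        Φ (fun a => ((t₁ a + t₂ a : ℝ) : ℂ)) * φ (fun a => (t₁ a : ℂ)) *
          φ (fun a => (t₂ a : ℂ))) :
    ∃ c : Fin d → ℝ, ∀ z : Fin d → ℂ,
      φ z = Φ z * Complex.exp (Complex.I * ∑ j, (c j : ℂ) * z j) :=
  statement7_general d ρ S Φ φ hΦ hφ V hV h0 heq
end
end

section
/- Let d ≥ 1 and let X be an ℝ^d-valued random variable. Suppose there exist a, b > 0 and ρ ∈ (0,1) such that E[exp(λᵀX)] ≤ a·exp(b·‖λ‖^ρ) for all λ ∈ ℝ^d, where ‖·‖ is the Euclidean norm. Then X = 0 almost surely. -/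
/-!
For a coordinate direction `u = ±eᵢ` and `t ≥ 0`, Chernoff's bound gives
`P(⟪u, X⟫ ≥ ε) ≤ a · exp (b t ^ ρ - ε t)`. Since `ρ < 1` the exponent tends to `-∞` as `t → ∞`,
so `⟪u, X⟫ ≤ 0` almost surely for both signs, i.e. every coordinate of `X` vanishes a.s.
-/

open MeasureTheory Filter Real Topology

lemma tendsto_mul_rpow_sub_mul_atTop_atBot (b : ℝ) {ρ ε : ℝ} (hρ : ρ < 1) (hε : 0 < ε) :
    Tendsto (fun t : ℝ => b * t ^ ρ - ε * t) atTop atBot := by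
  have hlim : Tendsto (fun t : ℝ => b * t ^ (ρ - 1) - ε) atTop (𝓝 (-ε)) := by
    simpa [neg_sub] using
      ((tendsto_rpow_neg_atTop (y := 1 - ρ) (by linarith)).const_mul b).sub_const ε
  refine (tendsto_id.atTop_mul_neg (neg_lt_zero.2 hε) hlim).congr' ?_
  filter_upwards [eventually_gt_atTop 0] with t ht
  rw [id, rpow_sub_one ht.ne']
  field_simp

lemma measure_ge_le_of_lintegral_exp_le {Ω : Type*} [MeasurableSpace Ω] {μ : Measure Ω}
    {Y : Ω → ℝ} (hY : Measurable Y) {t C : ℝ} (ht : 0 ≤ t)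
    (h : ∫⁻ ω, ENNReal.ofReal (exp (t * Y ω)) ∂μ ≤ ENNReal.ofReal C) (ε : ℝ) :
    μ {ω | ε ≤ Y ω} ≤ ENNReal.ofReal (C * exp (-(t * ε))) := by
  have hsub : {ω | ε ≤ Y ω} ⊆
      {ω | ENNReal.ofReal (exp (t * ε)) ≤ ENNReal.ofReal (exp (t * Y ω))} :=
    fun ω hω => ENNReal.ofReal_le_ofReal (exp_le_exp.2 (mul_le_mul_of_nonneg_left hω ht))
  calc μ {ω | ε ≤ Y ω}
      ≤ (∫⁻ ω, ENNReal.ofReal (exp (t * Y ω)) ∂μ) / ENNReal.ofReal (exp (t * ε)) :=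
        (measure_mono hsub).trans <| meas_ge_le_lintegral_div (by fun_prop)
          (by simp [exp_pos]) ENNReal.ofReal_ne_top
    _ ≤ ENNReal.ofReal C / ENNReal.ofReal (exp (t * ε)) := by gcongr
    _ = ENNReal.ofReal (C * exp (-(t * ε))) := by
      rw [← ENNReal.ofReal_div_of_pos (exp_pos _), exp_neg, div_eq_mul_inv]

lemma ae_nonpos_of_lintegral_exp_le {Ω : Type*} [MeasurableSpace Ω] {μ : Measure Ω}
    {Y : Ω → ℝ} (hY : Measurable Y) {a b ρ : ℝ} (hρ : ρ < 1)
    (h : ∀ t, 0 ≤ t →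
      ∫⁻ ω, ENNReal.ofReal (exp (t * Y ω)) ∂μ ≤ ENNReal.ofReal (a * exp (b * t ^ ρ))) :
    ∀ᵐ ω ∂μ, Y ω ≤ 0 := by
  have hnull : ∀ ε > 0, μ {ω | ε ≤ Y ω} = 0 := by
    intro ε hε
    have hbound : ∀ᶠ t in atTop,
        μ {ω | ε ≤ Y ω} ≤ ENNReal.ofReal (a * exp (b * t ^ ρ - ε * t)) := by
      filter_upwards [eventually_ge_atTop 0] with t ht
      simpa [mul_assoc, ← exp_add, sub_eq_add_neg, mul_comm ε t] using
        measure_ge_le_of_lintegral_exp_le hY ht (h t ht) ε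
    have hlim : Tendsto (fun t => ENNReal.ofReal (a * exp (b * t ^ ρ - ε * t))) atTop (𝓝 0) := by
      simpa using ENNReal.tendsto_ofReal <|
        (tendsto_exp_atBot.comp (tendsto_mul_rpow_sub_mul_atTop_atBot b hρ hε)).const_mul a
    exact nonpos_iff_eq_zero.1 (ge_of_tendsto hlim hbound)
  have hsmall : ∀ᵐ ω ∂μ, ∀ n : ℕ, ¬ 1 / ((n : ℝ) + 1) ≤ Y ω :=
    ae_all_iff.2 fun n => (measure_eq_zero_iff_ae_notMem.1 (hnull _ (by positivity)))
  filter_upwards [hsmall] with ω hω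
  by_contra! hpos
  obtain ⟨n, hn⟩ := exists_nat_one_div_lt hpos
  exact hω n hn.le

theorem statement9_general (d : ℕ)
    {Ω : Type*} [MeasurableSpace Ω] (P : Measure Ω)
    (X : Ω → EuclideanSpace ℝ (Fin d)) (hX : Measurable X)
    (a b ρ : ℝ) (hρ1 : ρ < 1)
    (hlap : ∀ l : EuclideanSpace ℝ (Fin d),
      ∫⁻ ω, ENNReal.ofReal (Real.exp (∑ i, l i * X ω i)) ∂P
        ≤ ENNReal.ofReal (a * Real.exp (b * ‖l‖ ^ ρ))) :
    ∀ᵐ ω ∂P, X ω = 0 := by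
  have hsigned : ∀ (i : Fin d) (s : ℝ), |s| = 1 → ∀ᵐ ω ∂P, s * X ω i ≤ 0 := by
    intro i s hs
    refine ae_nonpos_of_lintegral_exp_le (a := a) (b := b) (by fun_prop) hρ1 fun t ht => ?_
    simpa [PiLp.single_apply, PiLp.norm_single, abs_mul, hs, abs_of_nonneg ht, mul_assoc,
      mul_left_comm t s] using hlap (PiLp.single 2 i (s * t))
  have hcoord : ∀ᵐ ω ∂P, ∀ i, X ω i = 0 := ae_all_iff.2 fun i => by
    filter_upwards [hsigned i 1 (by simp), hsigned i (-1) (by simp)] with ω hpos hneg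
    linarith
  filter_upwards [hcoord] with ω hω
  ext i
  exact hω i

/-- if the Laplace transform of an ℝ^d-valued random variable `X` satisfies
`E[exp(λᵀX)] ≤ a·exp(b·‖λ‖^ρ)` for all `λ`, with `0 < ρ < 1`, then `X = 0` a.s. -/
theorem statement9 (d : ℕ) (hd : 1 ≤ d)
    {Ω : Type*} [MeasurableSpace Ω] (P : Measure Ω) [IsProbabilityMeasure P]
    (X : Ω → EuclideanSpace ℝ (Fin d)) (hX : Measurable X)
    (a b ρ : ℝ) (ha : 0 < a) (hb : 0 < b) (hρ0 : 0 < ρ) (hρ1 : ρ < 1)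
    (hlap : ∀ l : EuclideanSpace ℝ (Fin d),
      ∫⁻ ω, ENNReal.ofReal (Real.exp (∑ i, l i * X ω i)) ∂P
        ≤ ENNReal.ofReal (a * Real.exp (b * ‖l‖ ^ ρ))) :
    ∀ᵐ ω ∂P, X ω = 0 :=
  statement9_general d P X hX a b ρ hρ1 hlap
end

section
/- Let d ≥ 1 and let X be an ℝ^d-valued random variable. Suppose there exist a, b > 0 such that E[exp(λᵀX)] ≤ a·exp(b·‖λ‖) for all λ ∈ ℝ^d, where ‖·‖ is the Euclidean norm. Then ‖X‖ ≤ b almost surely; in particular X is almost surely bounded. -/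
open MeasureTheory Filter

/-! Chernoff's method: scaling `l` by `t ≥ 0`, Markov's inequality gives
`P {⟪l, X⟫ ≥ b ‖l‖ + ε} ≤ a e^{-tε}` for every `t`, so `⟪l, X⟫ ≤ b ‖l‖` almost surely.
Taking `l` in a countable dense set and passing to the closure, the bound holds for all `l`
simultaneously, and `l = X` yields `‖X‖² ≤ b ‖X‖`. -/

section Chernoff

variable {Ω : Type*} [MeasurableSpace Ω] {μ : Measure Ω} {f : Ω → ℝ} {a c : ℝ}

theorem measure_add_le_le_of_lintegral_exp_le (hf : AEMeasurable f μ) {t : ℝ} (ht : 0 ≤ t)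
    (h : ∫⁻ ω, ENNReal.ofReal (Real.exp (t * f ω)) ∂μ ≤ ENNReal.ofReal (a * Real.exp (t * c)))
    (ε : ℝ) :
    μ {ω | c + ε ≤ f ω} ≤ ENNReal.ofReal (a * Real.exp (-(t * ε))) := by
  set θ := ENNReal.ofReal (Real.exp (t * (c + ε)))
  have hsub : {ω | c + ε ≤ f ω} ⊆ {ω | θ ≤ ENNReal.ofReal (Real.exp (t * f ω))} :=
    fun ω hω => ENNReal.ofReal_le_ofReal (Real.exp_le_exp.2 (mul_le_mul_of_nonneg_left hω ht))
  have hsplit : ENNReal.ofReal (a * Real.exp (t * c))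
      = θ * ENNReal.ofReal (a * Real.exp (-(t * ε))) := by
    rw [← ENNReal.ofReal_mul (Real.exp_nonneg _), mul_left_comm, ← Real.exp_add]
    ring_nf
  have hmarkov : θ * μ {ω | c + ε ≤ f ω} ≤ θ * ENNReal.ofReal (a * Real.exp (-(t * ε))) :=
    calc θ * μ {ω | c + ε ≤ f ω}
        ≤ θ * μ {ω | θ ≤ ENNReal.ofReal (Real.exp (t * f ω))} := by gcongr
      _ ≤ ∫⁻ ω, ENNReal.ofReal (Real.exp (t * f ω)) ∂μ :=
          mul_meas_ge_le_lintegral₀ (by fun_prop) θ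
      _ ≤ _ := hsplit ▸ h
  exact (ENNReal.mul_le_mul_iff_right (by positivity) ENNReal.ofReal_ne_top).1 hmarkov

theorem measure_add_le_eq_zero_of_lintegral_exp_le (hf : AEMeasurable f μ)
    (h : ∀ t ≥ 0, ∫⁻ ω, ENNReal.ofReal (Real.exp (t * f ω)) ∂μ
      ≤ ENNReal.ofReal (a * Real.exp (t * c)))
    {ε : ℝ} (hε : 0 < ε) :
    μ {ω | c + ε ≤ f ω} = 0 := by
  have hlim : Tendsto (fun t => ENNReal.ofReal (a * Real.exp (-(t * ε)))) atTop (nhds 0) := by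
    simpa using ENNReal.tendsto_ofReal
      ((Real.tendsto_exp_neg_atTop_nhds_zero.comp (tendsto_id.atTop_mul_const hε)).const_mul a)
  refine le_antisymm (ge_of_tendsto hlim ?_) zero_le
  filter_upwards [eventually_ge_atTop 0] with t ht
  exact measure_add_le_le_of_lintegral_exp_le hf ht (h t ht) ε

theorem ae_le_of_lintegral_exp_le (hf : AEMeasurable f μ)
    (h : ∀ t ≥ 0, ∫⁻ ω, ENNReal.ofReal (Real.exp (t * f ω)) ∂μ
      ≤ ENNReal.ofReal (a * Real.exp (t * c))) :
    ∀ᵐ ω ∂μ, f ω ≤ c := by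
  obtain ⟨u, -, hu_pos, hu_lim⟩ := exists_seq_strictAnti_tendsto (0 : ℝ)
  have hae : ∀ n, ∀ᵐ ω ∂μ, f ω < c + u n := fun n => by
    simpa [ae_iff] using measure_add_le_eq_zero_of_lintegral_exp_le hf h (hu_pos n)
  filter_upwards [ae_all_iff.2 hae] with ω hω
  exact ge_of_tendsto (by simpa using tendsto_const_nhds.add hu_lim)
    (Eventually.of_forall fun n => (hω n).le)

end Chernoff

section InnerProduct

variable {E : Type*} [NormedAddCommGroup E] [InnerProductSpace ℝ E] {x : E} {b : ℝ}

theorem norm_le_of_forall_inner_le (hb : 0 ≤ b) (h : ∀ l : E, inner ℝ l x ≤ b * ‖l‖) :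
    ‖x‖ ≤ b := by
  have hx := h x
  rw [real_inner_self_eq_norm_sq] at hx
  nlinarith [norm_nonneg x]

theorem forall_inner_le_of_dense {s : Set E} (hs : Dense s)
    (h : ∀ l ∈ s, inner ℝ l x ≤ b * ‖l‖) (l : E) : inner ℝ l x ≤ b * ‖l‖ :=
  hs.induction h (isClosed_le (by fun_prop) (by fun_prop)) l

end InnerProduct

theorem EuclideanSpace.sum_mul_eq_inner {n : ℕ} (l x : EuclideanSpace ℝ (Fin n)) :
    ∑ i, l i * x i = inner ℝ l x := by
  simp [PiLp.inner_apply, mul_comm]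

theorem statement10_general (d : ℕ)
    {Ω : Type*} [MeasurableSpace Ω] (P : Measure Ω)
    (X : Ω → EuclideanSpace ℝ (Fin d)) (hX : Measurable X)
    (a b : ℝ) (hb : 0 < b)
    (hlap : ∀ l : EuclideanSpace ℝ (Fin d),
      ∫⁻ ω, ENNReal.ofReal (Real.exp (∑ i, l i * X ω i)) ∂P
        ≤ ENNReal.ofReal (a * Real.exp (b * ‖l‖))) :
    ∀ᵐ ω ∂P, ‖X ω‖ ≤ b := by
  have hdir : ∀ l, ∀ᵐ ω ∂P, inner ℝ l (X ω) ≤ b * ‖l‖ := fun l =>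
    ae_le_of_lintegral_exp_le (by fun_prop) fun t ht => by
      simpa only [EuclideanSpace.sum_mul_eq_inner, real_inner_smul_left, norm_smul,
        Real.norm_eq_abs, abs_of_nonneg ht, mul_left_comm b] using hlap (t • l)
  obtain ⟨s, hs_count, hs_dense⟩ := TopologicalSpace.exists_countable_dense
    (EuclideanSpace ℝ (Fin d))
  filter_upwards [(ae_ball_iff hs_count).2 fun l _ => hdir l] with ω hω
  exact norm_le_of_forall_inner_le hb.le (forall_inner_le_of_dense hs_dense hω)

/-- if `E[exp(λᵀX)] ≤ a·exp(b·‖λ‖)` for all `λ ∈ ℝ^d`, then `‖X‖ ≤ b` a.s.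
(case ρ = 1 of the Chernoff-bound characterization of Assumption (H2)). -/
theorem statement10 (d : ℕ) (hd : 1 ≤ d)
    {Ω : Type*} [MeasurableSpace Ω] (P : Measure Ω) [IsProbabilityMeasure P]
    (X : Ω → EuclideanSpace ℝ (Fin d)) (hX : Measurable X)
    (a b : ℝ) (ha : 0 < a) (hb : 0 < b)
    (hlap : ∀ l : EuclideanSpace ℝ (Fin d),
      ∫⁻ ω, ENNReal.ofReal (Real.exp (∑ i, l i * X ω i)) ∂P
        ≤ ENNReal.ofReal (a * Real.exp (b * ‖l‖))) :
    ∀ᵐ ω ∂P, ‖X ω‖ ≤ b :=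
  statement10_general d P X hX a b hb hlap
end

section
/- Let d ≥ 1, ν_est > 0, and let (Y_ℓ)_{ℓ ≥ 1} = ((Y_ℓ⁽¹⁾, Y_ℓ⁽²⁾))_{ℓ ≥ 1} be i.i.d. random variables with values in ℝ^d × ℝ^d, with joint characteristic function Φ(t₁,t₂) = E[exp(i·t₁ᵀY₁⁽¹⁾ + i·t₂ᵀY₁⁽²⁾)]. Let φ : ℝ^d → ℂ be measurable and bounded on [−2ν_est, 2ν_est]^d. Define the empirical characteristic function φ̃_n(t₁,t₂) = n^{−1}∑_{ℓ=1}^n exp(i·t₁ᵀY_ℓ⁽¹⁾ + i·t₂ᵀY_ℓ⁽²⁾) and M_n(φ) = ∫_{[−ν_est,ν_est]^d × [−ν_est,ν_est]^d} |φ(t₁+t₂)·φ̃_n(t₁,0)·φ̃_n(0,t₂) − φ̃_n(t₁,t₂)·φ(t₁)·φ(t₂)|² dt₁dt₂. Then, almost surely, M_n(φ) converges as n → ∞ to M(φ) = ∫_{[−ν_est,ν_est]^d × [−ν_est,ν_est]^d} |φ(t₁+t₂)·Φ(t₁,0)·Φ(0,t₂) − Φ(t₁,t₂)·φ(t₁)·φ(t₂)|²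 dt₁dt₂. In particular, in the repeated measurements model Y₁ = (X+ε⁽¹⁾, X+ε⁽²⁾) with X, ε⁽¹⁾, ε⁽²⁾ independent, M(φ) equals ∫∫ |φ(t₁+t₂)Φ_X(t₁)Φ_X(t₂) − Φ_X(t₁+t₂)φ(t₁)φ(t₂)|²·|Φ_{ε⁽¹⁾}(t₁)Φ_{ε⁽²⁾}(t₂)|² dt₁dt₂. -/
noncomputable section
open MeasureTheory Filter

/-- the box `[−ν, ν]^d` in `ℝ^d` -/
def ebox (d : ℕ) (ν : ℝ) : Set (EuclideanSpace ℝ (Fin d)) := {t | ∀ a, |t a| ≤ ν}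

/-- empirical characteristic function of the first `n` observations -/
def empCF {d : ℕ} {Ω : Type*} (Y : ℕ → Ω → EuclideanSpace ℝ (Fin d) × EuclideanSpace ℝ (Fin d))
    (n : ℕ) (ω : Ω) (t₁ t₂ : EuclideanSpace ℝ (Fin d)) : ℂ :=
  (n : ℂ)⁻¹ * ∑ ℓ ∈ Finset.range n, Complex.exp (Complex.I *
    (((∑ a, t₁ a * (Y ℓ ω).1 a) + ∑ a, t₂ a * (Y ℓ ω).2 a : ℝ) : ℂ))

/-- empirical contrast `M_n(φ)` -/
def Mn {d : ℕ} {Ω : Type*}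
    (νest : ℝ) (Y : ℕ → Ω → EuclideanSpace ℝ (Fin d) × EuclideanSpace ℝ (Fin d))
    (φ : EuclideanSpace ℝ (Fin d) → ℂ) (n : ℕ) (ω : Ω) : ℝ :=
  ∫ t in ebox d νest ×ˢ ebox d νest,
    ‖(φ (t.1 + t.2) * empCF Y n ω t.1 0 * empCF Y n ω 0 t.2
      - empCF Y n ω t.1 t.2 * φ t.1 * φ t.2)‖ ^ 2

/-- population contrast `M(φ)` built from the joint characteristic function `Φ` -/
def Mpop {d : ℕ} (νest : ℝ)
    (Φ : EuclideanSpace ℝ (Fin d) → EuclideanSpace ℝ (Fin d) → ℂ)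
    (φ : EuclideanSpace ℝ (Fin d) → ℂ) : ℝ :=
  ∫ t in ebox d νest ×ˢ ebox d νest,
    ‖(φ (t.1 + t.2) * Φ t.1 0 * Φ 0 t.2 - Φ t.1 t.2 * φ t.1 * φ t.2)‖ ^ 2

/-! For fixed `(t₁, t₂)` the empirical characteristic function is an average of i.i.d. variables
of modulus one, so by the strong law of large numbers it converges almost surely to `Φ(t₁, t₂)`.
Fubini turns "for every `t`, almost surely" into "almost surely, for almost every `t`", at the
three points `(t₁, t₂)`, `(t₁, 0)`, `(0, t₂)` at once. Since characteristic functions are bounded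
by one and `φ` is bounded on the doubled box, dominated convergence on the compact box gives
`M_n(φ) → M(φ)`. In the repeated measurements model independence factorises
`Φ(t₁, t₂) = Φ_X(t₁ + t₂) Φ_{ε⁽¹⁾}(t₁) Φ_{ε⁽²⁾}(t₂)`, and the common factor
`Φ_{ε⁽¹⁾}(t₁) Φ_{ε⁽²⁾}(t₂)` comes out of the integrand. -/

open ProbabilityTheory

section CharFn

variable {d : ℕ} {Ω : Type*} [MeasurableSpace Ω] {P : Measure Ω}

def expDot (t x : EuclideanSpace ℝ (Fin d)) : ℂ :=
  Complex.exp (Complex.I * ((∑ a, t a * x a : ℝ) : ℂ))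

def charFn (P : Measure Ω) (W : Ω → EuclideanSpace ℝ (Fin d)) (t : EuclideanSpace ℝ (Fin d)) :
    ℂ :=
  ∫ ω, expDot t (W ω) ∂P

def jointCharFn (P : Measure Ω) (Z : Ω → EuclideanSpace ℝ (Fin d) × EuclideanSpace ℝ (Fin d))
    (t₁ t₂ : EuclideanSpace ℝ (Fin d)) : ℂ :=
  ∫ ω, expDot t₁ (Z ω).1 * expDot t₂ (Z ω).2 ∂P

lemma norm_expDot (t x : EuclideanSpace ℝ (Fin d)) : ‖expDot t x‖ = 1 := by
  simp [expDot, Complex.norm_exp]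

@[fun_prop]
lemma Measurable.expDot {α : Type*} [MeasurableSpace α] {f g : α → EuclideanSpace ℝ (Fin d)}
    (hf : Measurable f) (hg : Measurable g) : Measurable fun x => expDot (f x) (g x) := by
  unfold _root_.expDot; fun_prop

lemma expDot_zero_left (x : EuclideanSpace ℝ (Fin d)) : expDot 0 x = 1 := by
  simp [expDot]

lemma expDot_add_left (t t' x : EuclideanSpace ℝ (Fin d)) :
    expDot (t + t') x = expDot t x * expDot t' x := by
  simp only [expDot, ← Complex.exp_add, PiLp.add_apply, add_mul, Finset.sum_add_distrib]
  push_cast; ring_nf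

lemma expDot_add_right (t x y : EuclideanSpace ℝ (Fin d)) :
    expDot t (x + y) = expDot t x * expDot t y := by
  simp only [expDot, ← Complex.exp_add, PiLp.add_apply, mul_add, Finset.sum_add_distrib]
  push_cast; ring_nf

lemma cexp_I_mul_add_eq_expDot_mul (t₁ t₂ y₁ y₂ : EuclideanSpace ℝ (Fin d)) :
    Complex.exp (Complex.I * (((∑ a, t₁ a * y₁ a) + ∑ a, t₂ a * y₂ a : ℝ) : ℂ)) =
      expDot t₁ y₁ * expDot t₂ y₂ := by
  rw [expDot, expDot, ← Complex.exp_add]; push_cast; ring_nf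

lemma charFn_zero [IsProbabilityMeasure P] (W : Ω → EuclideanSpace ℝ (Fin d)) :
    charFn P W 0 = 1 := by
  simp [charFn, expDot_zero_left]

lemma measurable_jointCharFn [SFinite P]
    {Z : Ω → EuclideanSpace ℝ (Fin d) × EuclideanSpace ℝ (Fin d)} (hZ : Measurable Z) :
    Measurable fun s : EuclideanSpace ℝ (Fin d) × EuclideanSpace ℝ (Fin d) =>
      jointCharFn P Z s.1 s.2 :=
  (StronglyMeasurable.integral_prod_right' (ν := P)
    (f := fun q : (EuclideanSpace ℝ (Fin d) × EuclideanSpace ℝ (Fin d)) × Ω =>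
      expDot q.1.1 (Z q.2).1 * expDot q.1.2 (Z q.2).2)
    (Measurable.stronglyMeasurable (by fun_prop))).measurable

lemma jointCharFn_add_add {X ε₁ ε₂ : Ω → EuclideanSpace ℝ (Fin d)} (hX : Measurable X)
    (hε₁ : Measurable ε₁) (hε₂ : Measurable ε₂)
    (hXε : IndepFun X (fun ω => (ε₁ ω, ε₂ ω)) P) (hε : IndepFun ε₁ ε₂ P)
    (t₁ t₂ : EuclideanSpace ℝ (Fin d)) :
    jointCharFn P (fun ω => (X ω + ε₁ ω, X ω + ε₂ ω)) t₁ t₂ =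
      charFn P X (t₁ + t₂) * (charFn P ε₁ t₁ * charFn P ε₂ t₂) := by
  have hexp (t : EuclideanSpace ℝ (Fin d)) : Measurable (expDot t) :=
    measurable_const.expDot measurable_id
  calc jointCharFn P (fun ω => (X ω + ε₁ ω, X ω + ε₂ ω)) t₁ t₂
      = ∫ ω, expDot (t₁ + t₂) (X ω) *
          (fun e : EuclideanSpace ℝ (Fin d) × EuclideanSpace ℝ (Fin d) =>
            expDot t₁ e.1 * expDot t₂ e.2) (ε₁ ω, ε₂ ω) ∂P := by
        simp only [jointCharFn, expDot_add_left, expDot_add_right]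
        congr 1; funext ω; ring
    _ = charFn P X (t₁ + t₂) * ∫ ω, expDot t₁ (ε₁ ω) * expDot t₂ (ε₂ ω) ∂P :=
        hXε.integral_fun_comp_mul_comp hX.aemeasurable (hε₁.prodMk hε₂).aemeasurable
          (hexp _).aestronglyMeasurable
          (((hexp t₁).comp measurable_fst).mul ((hexp t₂).comp measurable_snd)).aestronglyMeasurable
    _ = charFn P X (t₁ + t₂) * (charFn P ε₁ t₁ * charFn P ε₂ t₂) := by
        rw [hε.integral_fun_comp_mul_comp hε₁.aemeasurable hε₂.aemeasurable
          (hexp _).aestronglyMeasurable (hexp _).aestronglyMeasurable]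
        rfl

end CharFn

section Box

variable {d : ℕ}

lemma ebox_eq_preimage (ν : ℝ) :
    ebox d ν = WithLp.ofLp ⁻¹' Set.univ.pi fun _ => Set.Icc (-ν) ν := by
  ext t
  simp only [ebox, Set.mem_preimage, Set.mem_univ_pi, Set.mem_Icc, abs_le]
  rfl

lemma isCompact_ebox (ν : ℝ) : IsCompact (ebox d ν) := by
  rw [ebox_eq_preimage]
  exact (PiLp.homeomorph 2 _).isCompact_preimage.mpr (isCompact_univ_pi fun _ => isCompact_Icc)

lemma measurableSet_ebox (ν : ℝ) : MeasurableSet (ebox d ν) :=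
  (isCompact_ebox ν).isClosed.measurableSet

lemma ebox_subset_ebox_two_mul (ν : ℝ) : ebox d ν ⊆ ebox d (2 * ν) :=
  fun t ht a => (ht a).trans (by linarith [(abs_nonneg (t a)).trans (ht a)])

lemma add_mem_ebox {ν μ : ℝ} {s t : EuclideanSpace ℝ (Fin d)} (hs : s ∈ ebox d ν)
    (ht : t ∈ ebox d μ) : s + t ∈ ebox d (ν + μ) :=
  fun a => (abs_add_le (s a) (t a)).trans (add_le_add (hs a) (ht a))

end Box

lemma norm_mul_mul_sub_mul_mul_le {B : ℝ} {a b c u v w : ℂ} (ha : ‖a‖ ≤ B) (hb : ‖b‖ ≤ B)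
    (hc : ‖c‖ ≤ B) (hu : ‖u‖ ≤ 1) (hv : ‖v‖ ≤ 1) (hw : ‖w‖ ≤ 1) :
    ‖a * u * v - w * b * c‖ ≤ B + B * B := by
  have hB : 0 ≤ B := (norm_nonneg a).trans ha
  calc ‖a * u * v - w * b * c‖ ≤ ‖a‖ * ‖u‖ * ‖v‖ + ‖w‖ * ‖b‖ * ‖c‖ := by
        simpa only [norm_mul] using norm_sub_le (a * u * v) (w * b * c)
    _ ≤ B * 1 * 1 + 1 * B * B := by gcongr
    _ = B + B * B := by ring

lemma norm_sq_mul_mul_sub_eq (p q r x y z e₁ e₂ : ℂ) :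
    ‖p * (x * e₁) * (y * e₂) - z * (e₁ * e₂) * q * r‖ ^ 2 =
      ‖p * x * y - z * q * r‖ ^ 2 * ‖e₁ * e₂‖ ^ 2 := by
  rw [← mul_pow, ← norm_mul]; ring_nf

lemma tendsto_Mpop {d : ℕ} {ν B : ℝ} {φ : EuclideanSpace ℝ (Fin d) → ℂ} (hφm : Measurable φ)
    (hφb : ∀ t ∈ ebox d (2 * ν), ‖φ t‖ ≤ B)
    {F : ℕ → EuclideanSpace ℝ (Fin d) → EuclideanSpace ℝ (Fin d) → ℂ}
    {G : EuclideanSpace ℝ (Fin d) → EuclideanSpace ℝ (Fin d) → ℂ}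
    (hF : ∀ n t₁ t₂, ‖F n t₁ t₂‖ ≤ 1)
    (hFm : ∀ n, Measurable fun s : EuclideanSpace ℝ (Fin d) × EuclideanSpace ℝ (Fin d) =>
      F n s.1 s.2)
    (hlim : ∀ᵐ t ∂(volume.restrict (ebox d ν ×ˢ ebox d ν)),
      Tendsto (fun n => F n t.1 t.2) atTop (nhds (G t.1 t.2)) ∧
      Tendsto (fun n => F n t.1 0) atTop (nhds (G t.1 0)) ∧
      Tendsto (fun n => F n 0 t.2) atTop (nhds (G 0 t.2))) :
    Tendsto (fun n => Mpop ν (F n) φ) atTop (nhds (Mpop ν G φ)) := by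
  have hbox := (measurableSet_ebox (d := d) ν).prod (measurableSet_ebox (d := d) ν)
  have : IsFiniteMeasure (volume.restrict (ebox d ν ×ˢ ebox d ν)) :=
    isFiniteMeasure_restrict.mpr ((isCompact_ebox ν).prod (isCompact_ebox ν)).measure_lt_top.ne
  refine tendsto_integral_of_dominated_convergence (fun _ => (B + B * B) ^ 2) (fun n => ?_)
    (integrable_const _) (fun n => ?_) ?_
  · have h₁₂ := hFm n
    have h₁ : Measurable fun t : EuclideanSpace ℝ (Fin d) × EuclideanSpace ℝ (Fin d) =>
        F n t.1 0 := (hFm n).comp (measurable_fst.prodMk measurable_const)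
    have h₂ : Measurable fun t : EuclideanSpace ℝ (Fin d) × EuclideanSpace ℝ (Fin d) =>
        F n 0 t.2 := (hFm n).comp (measurable_const.prodMk measurable_snd)
    exact Measurable.aestronglyMeasurable (by fun_prop)
  · filter_upwards [ae_restrict_mem hbox] with t ⟨ht₁, ht₂⟩
    have ht : t.1 + t.2 ∈ ebox d (2 * ν) := two_mul ν ▸ add_mem_ebox ht₁ ht₂
    rw [norm_pow, norm_norm]
    gcongr
    exact norm_mul_mul_sub_mul_mul_le (hφb _ ht) (hφb _ (ebox_subset_ebox_two_mul ν ht₁))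
      (hφb _ (ebox_subset_ebox_two_mul ν ht₂)) (hF _ _ _) (hF _ _ _) (hF _ _ _)
  · filter_upwards [hlim] with t ⟨h₁₂, h₁, h₂⟩
    exact ((((tendsto_const_nhds.mul h₁).mul h₂).sub
      ((h₁₂.mul tendsto_const_nhds).mul tendsto_const_nhds)).norm).pow 2

section Empirical

variable {d : ℕ} {Ω : Type*}

lemma empCF_eq_smul_sum (Y : ℕ → Ω → EuclideanSpace ℝ (Fin d) × EuclideanSpace ℝ (Fin d))
    (n : ℕ) (ω : Ω) (t₁ t₂ : EuclideanSpace ℝ (Fin d)) :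
    empCF Y n ω t₁ t₂ =
      (n : ℝ)⁻¹ • ∑ ℓ ∈ Finset.range n, expDot t₁ (Y ℓ ω).1 * expDot t₂ (Y ℓ ω).2 := by
  simp only [empCF, cexp_I_mul_add_eq_expDot_mul, Complex.real_smul, Complex.ofReal_inv,
    Complex.ofReal_natCast]

lemma norm_empCF_le_one (Y : ℕ → Ω → EuclideanSpace ℝ (Fin d) × EuclideanSpace ℝ (Fin d))
    (n : ℕ) (ω : Ω) (t₁ t₂ : EuclideanSpace ℝ (Fin d)) : ‖empCF Y n ω t₁ t₂‖ ≤ 1 := by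
  rw [empCF_eq_smul_sum, norm_smul, norm_inv, Real.norm_natCast]
  calc (n : ℝ)⁻¹ * ‖∑ ℓ ∈ Finset.range n, expDot t₁ (Y ℓ ω).1 * expDot t₂ (Y ℓ ω).2‖
      ≤ (n : ℝ)⁻¹ * n := by
        gcongr
        refine (norm_sum_le _ _).trans ?_
        simp [norm_expDot]
    _ ≤ 1 := by
        rcases n.eq_zero_or_pos with rfl | hn
        · simp
        · rw [inv_mul_cancel₀ (by positivity)]

variable [MeasurableSpace Ω] {P : Measure Ω}
  {Y : ℕ → Ω → EuclideanSpace ℝ (Fin d) × EuclideanSpace ℝ (Fin d)}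

lemma measurable_empCF (hYm : ∀ ℓ, Measurable (Y ℓ)) (n : ℕ) :
    Measurable fun q : (EuclideanSpace ℝ (Fin d) × EuclideanSpace ℝ (Fin d)) × Ω =>
      empCF Y n q.2 q.1.1 q.1.2 := by
  simp only [empCF_eq_smul_sum]
  fun_prop

lemma measurable_empCF_apply (hYm : ∀ ℓ, Measurable (Y ℓ)) (n : ℕ) (ω : Ω) :
    Measurable fun s : EuclideanSpace ℝ (Fin d) × EuclideanSpace ℝ (Fin d) =>
      empCF Y n ω s.1 s.2 :=
  (measurable_empCF hYm n).comp (f := fun s => (s, ω)) (by fun_prop)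

lemma ae_tendsto_empCF [IsProbabilityMeasure P] (hYm : ∀ ℓ, Measurable (Y ℓ))
    (hindep : Pairwise fun i j => IndepFun (Y i) (Y j) P)
    (hident : ∀ ℓ, Measure.map (Y ℓ) P = Measure.map (Y 0) P)
    (t₁ t₂ : EuclideanSpace ℝ (Fin d)) :
    ∀ᵐ ω ∂P, Tendsto (fun n => empCF Y n ω t₁ t₂) atTop (nhds (jointCharFn P (Y 0) t₁ t₂)) := by
  set f : EuclideanSpace ℝ (Fin d) × EuclideanSpace ℝ (Fin d) → ℂ :=
    fun y => expDot t₁ y.1 * expDot t₂ y.2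
  have hf : Measurable f := by fun_prop
  have hint : Integrable (f ∘ Y 0) P :=
    (integrable_const (1 : ℝ)).mono' (hf.comp (hYm 0)).aestronglyMeasurable
      (ae_of_all _ fun ω => by simp [f, norm_expDot])
  have hlaw := strong_law_ae (fun ℓ => f ∘ Y ℓ) hint
    (fun i j hij => (hindep hij).comp hf hf)
    (fun ℓ => (IdentDistrib.mk (hYm ℓ).aemeasurable (hYm 0).aemeasurable (hident ℓ)).comp hf)
  filter_upwards [hlaw] with ω hω
  simp only [empCF_eq_smul_sum]
  exact hω

lemma ae_ae_tendsto_empCF [IsProbabilityMeasure P] (hYm : ∀ ℓ, Measurable (Y ℓ))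
    (hindep : Pairwise fun i j => IndepFun (Y i) (Y j) P)
    (hident : ∀ ℓ, Measure.map (Y ℓ) P = Measure.map (Y 0) P)
    {T : Type*} [MeasurableSpace T] (μ : Measure T) [SFinite μ]
    (g : T → EuclideanSpace ℝ (Fin d) × EuclideanSpace ℝ (Fin d)) (hg : Measurable g) :
    ∀ᵐ ω ∂P, ∀ᵐ x ∂μ, Tendsto (fun n => empCF Y n ω (g x).1 (g x).2) atTop
      (nhds (jointCharFn P (Y 0) (g x).1 (g x).2)) := by
  have hmeas : MeasurableSet {q : T × Ω | Tendsto (fun n => empCF Y n q.2 (g q.1).1 (g q.1).2)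
      atTop (nhds (jointCharFn P (Y 0) (g q.1).1 (g q.1).2))} :=
    measurableSet_tendsto_fun (fun n => (measurable_empCF hYm n).comp (hg.prodMap measurable_id))
      (((measurable_jointCharFn (hYm 0)).comp hg).comp measurable_fst)
  exact (Measure.ae_ae_comm hmeas).mp
    (ae_of_all _ fun x => ae_tendsto_empCF hYm hindep hident _ _)

end Empirical

theorem statement17_general (d : ℕ) (νest : ℝ)
    {Ω : Type*} [MeasurableSpace Ω] (P : Measure Ω) [IsProbabilityMeasure P]
    (Y : ℕ → Ω → EuclideanSpace ℝ (Fin d) × EuclideanSpace ℝ (Fin d))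
    (hYm : ∀ ℓ, Measurable (Y ℓ))
    (hindep : ProbabilityTheory.iIndepFun Y P)
    (hident : ∀ ℓ, Measure.map (Y ℓ) P = Measure.map (Y 0) P)
    (Φ : EuclideanSpace ℝ (Fin d) → EuclideanSpace ℝ (Fin d) → ℂ)
    (hΦ : Φ = fun t₁ t₂ => ∫ ω, Complex.exp (Complex.I *
      (((∑ a, t₁ a * (Y 0 ω).1 a) + ∑ a, t₂ a * (Y 0 ω).2 a : ℝ) : ℂ)) ∂P)
    (φ : EuclideanSpace ℝ (Fin d) → ℂ) (hφm : Measurable φ)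
    (hφb : ∃ B : ℝ, ∀ t : EuclideanSpace ℝ (Fin d), (∀ a, |t a| ≤ 2 * νest) →
      ‖φ t‖ ≤ B) :
    (∀ᵐ ω ∂P, Tendsto (fun n => Mn νest Y φ n ω) atTop (nhds (Mpop νest Φ φ))) ∧
    (∀ X ε₁ ε₂ : Ω → EuclideanSpace ℝ (Fin d),
      Measurable X → Measurable ε₁ → Measurable ε₂ →
      ProbabilityTheory.iIndepFun ![X, ε₁, ε₂] P →
      (∀ ω, Y 0 ω = (X ω + ε₁ ω, X ω + ε₂ ω)) →
      Mpop νest Φ φ =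
        ∫ t in ebox d νest ×ˢ ebox d νest,
          ‖(φ (t.1 + t.2) *
                (∫ ω, Complex.exp (Complex.I * ((∑ a, t.1 a * X ω a : ℝ) : ℂ)) ∂P) *
                (∫ ω, Complex.exp (Complex.I * ((∑ a, t.2 a * X ω a : ℝ) : ℂ)) ∂P) -
              (∫ ω, Complex.exp (Complex.I * ((∑ a, (t.1 + t.2) a * X ω a : ℝ) : ℂ)) ∂P) *
                φ t.1 * φ t.2)‖ ^ 2 *
          ‖((∫ ω, Complex.exp (Complex.I * ((∑ a, t.1 a * ε₁ ω a : ℝ) : ℂ)) ∂P) *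
              (∫ ω, Complex.exp (Complex.I * ((∑ a, t.2 a * ε₂ ω a : ℝ) : ℂ)) ∂P))‖ ^ 2) := by
  obtain ⟨B, hB⟩ := hφb
  have hΦY : Φ = jointCharFn P (Y 0) := by
    simp only [hΦ, cexp_I_mul_add_eq_expDot_mul]
    rfl
  subst hΦY
  refine ⟨?_, fun X ε₁ ε₂ hX hε₁ hε₂ hind hY₀ => ?_⟩
  · have hpair : Pairwise fun i j => IndepFun (Y i) (Y j) P := fun i j hij => hindep.indepFun hij
    have hconv := ae_ae_tendsto_empCF hYm hpair hident
      (volume.restrict (ebox d νest ×ˢ ebox d νest))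
    filter_upwards [hconv _ measurable_id, hconv _ (measurable_fst.prodMk measurable_const),
      hconv _ (measurable_const.prodMk measurable_snd)] with ω h₁₂ h₁ h₂
    refine tendsto_Mpop (F := fun n => empCF Y n ω) hφm hB (norm_empCF_le_one Y · ω)
      (measurable_empCF_apply hYm · ω) (h₁₂.and (h₁.and h₂))
  · have hmeas : ∀ i, Measurable (![X, ε₁, ε₂] i) := by
      intro i; fin_cases i <;> assumption
    have hXε : IndepFun X (fun ω => (ε₁ ω, ε₂ ω)) P := by
      simpa using (hind.indepFun_prodMk hmeas 1 2 0 (by decide) (by decide)).symm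
    have hε : IndepFun ε₁ ε₂ P := by
      simpa using hind.indepFun (show (1 : Fin 3) ≠ 2 by decide)
    rw [show Y 0 = fun ω => (X ω + ε₁ ω, X ω + ε₂ ω) from funext hY₀]
    refine integral_congr_ae (ae_of_all _ fun t => ?_)
    simp only [jointCharFn_add_add hX hε₁ hε₂ hXε hε, add_zero, zero_add, charFn_zero, mul_one,
      one_mul]
    exact norm_sq_mul_mul_sub_eq _ _ _ _ _ _ _ _

/-- a.s. convergence of the empirical contrast `M_n(φ)` to the population
contrast `M(φ)`, and the expression of `M(φ)` in the repeated measurements model. -/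
theorem statement17 (d : ℕ) (hd : 1 ≤ d) (νest : ℝ) (hν : 0 < νest)
    {Ω : Type*} [MeasurableSpace Ω] (P : Measure Ω) [IsProbabilityMeasure P]
    (Y : ℕ → Ω → EuclideanSpace ℝ (Fin d) × EuclideanSpace ℝ (Fin d))
    (hYm : ∀ ℓ, Measurable (Y ℓ))
    (hindep : ProbabilityTheory.iIndepFun Y P)
    (hident : ∀ ℓ, Measure.map (Y ℓ) P = Measure.map (Y 0) P)
    (Φ : EuclideanSpace ℝ (Fin d) → EuclideanSpace ℝ (Fin d) → ℂ)
    (hΦ : Φ = fun t₁ t₂ => ∫ ω, Complex.exp (Complex.I *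
      (((∑ a, t₁ a * (Y 0 ω).1 a) + ∑ a, t₂ a * (Y 0 ω).2 a : ℝ) : ℂ)) ∂P)
    (φ : EuclideanSpace ℝ (Fin d) → ℂ) (hφm : Measurable φ)
    (hφb : ∃ B : ℝ, ∀ t : EuclideanSpace ℝ (Fin d), (∀ a, |t a| ≤ 2 * νest) →
      ‖φ t‖ ≤ B) :
    (∀ᵐ ω ∂P, Tendsto (fun n => Mn νest Y φ n ω) atTop (nhds (Mpop νest Φ φ))) ∧
    (∀ X ε₁ ε₂ : Ω → EuclideanSpace ℝ (Fin d),
      Measurable X → Measurable ε₁ → Measurable ε₂ →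
      ProbabilityTheory.iIndepFun ![X, ε₁, ε₂] P →
      (∀ ω, Y 0 ω = (X ω + ε₁ ω, X ω + ε₂ ω)) →
      Mpop νest Φ φ =
        ∫ t in ebox d νest ×ˢ ebox d νest,
          ‖(φ (t.1 + t.2) *
                (∫ ω, Complex.exp (Complex.I * ((∑ a, t.1 a * X ω a : ℝ) : ℂ)) ∂P) *
                (∫ ω, Complex.exp (Complex.I * ((∑ a, t.2 a * X ω a : ℝ) : ℂ)) ∂P) -
              (∫ ω, Complex.exp (Complex.I * ((∑ a, (t.1 + t.2) a * X ω a : ℝ) : ℂ)) ∂P) *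
                φ t.1 * φ t.2)‖ ^ 2 *
          ‖((∫ ω, Complex.exp (Complex.I * ((∑ a, t.1 a * ε₁ ω a : ℝ) : ℂ)) ∂P) *
              (∫ ω, Complex.exp (Complex.I * ((∑ a, t.2 a * ε₂ ω a : ℝ) : ℂ)) ∂P))‖ ^ 2) :=
  statement17_general d νest P Y hYm hindep hident Φ hΦ φ hφm hφb
end
end
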